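/- Define the dilogarithm Li₂(z) = Σ_{n=1}^∞ zⁿ/n² for |z| ≤ 1. Let ζ > 0, μ > 0, and let η : [1, ∞) → (0, 1/2) be differentiable and strictly decreasing with −η'(x) ≤ ζ·η(x) for all x ≥ 1; set M = 2η(1) and m = lim_{x→∞} 2η(x). Define the total privacy budget ε = (4/μ)·∫₁^∞ log((1 + 2η(x))/(1 − 2η(x))) dx ∈ [0, +∞]. Then ε ≥ (2/(μζ))·(Li₂(M²) − Li₂(m²)). -/
import Mathlib


open MeasureTheory

private lemma dpi_deriv_nonpos (η : ℝ → ℝ) (hdiff : ∀ x ≥ (1 : ℝ), DifferentiableAt ℝ η x)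
    (hanti : StrictAntiOn η (Set.Ici 1)) {x : ℝ} (hx : 1 ≤ x) : deriv η x ≤ 0 := by
  have h := (hdiff x hx).hasDerivAt
  rw [hasDerivAt_iff_tendsto_slope] at h
  have h' : Filter.Tendsto (slope η x) (nhdsWithin x (Set.Ioi x)) (nhds (deriv η x)) :=
    h.mono_left (nhdsWithin_mono x fun y hy => ne_of_gt hy)
  refine le_of_tendsto h' ?_
  filter_upwards [self_mem_nhdsWithin] with y hy
  have hxy : x < y := hy
  have : η y < η x := hanti (Set.mem_Ici.2 hx) (Set.mem_Ici.2 (le_of_lt (lt_of_le_of_lt hx hxy))) hxy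
  have hd : 0 < y - x := by linarith
  rw [slope_def_field]
  have : η y - η x < 0 := by linarith
  exact le_of_lt (div_neg_of_neg_of_pos this hd)

private lemma dpi_key (ζ : ℝ) (hζ : 0 < ζ) (η : ℝ → ℝ)
    (hdiff : ∀ x ≥ (1 : ℝ), DifferentiableAt ℝ η x)
    (hrange : ∀ x ≥ (1 : ℝ), η x ∈ Set.Ioo (0 : ℝ) (1 / 2))
    (hanti : StrictAntiOn η (Set.Ici 1))
    (hdecay : ∀ x ≥ (1 : ℝ), -deriv η x ≤ ζ * η x)
    (p : ℕ) (hp : 1 ≤ p) (T : ℝ) (hT : 1 ≤ T) :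
    (2 * η 1) ^ p - (2 * η T) ^ p ≤ p * ζ * ∫ x in (1:ℝ)..T, (2 * η x) ^ p := by
  set h' : ℝ → ℝ := fun x => p * (2 * η x) ^ (p - 1) * (2 * deriv η x) with hh'
  have hIcc : Set.uIcc (1:ℝ) T = Set.Icc 1 T := Set.uIcc_of_le hT
  have hderiv : ∀ x ∈ Set.uIcc (1:ℝ) T, HasDerivAt (fun x => (2 * η x) ^ p) (h' x) x := by
    intro x hx
    rw [hIcc] at hx
    exact (((hdiff x hx.1).hasDerivAt.const_mul 2).pow p)
  have hηc : ContinuousOn η (Set.Ici 1) := fun x hx => ((hdiff x hx).continuousAt).continuousWithinAt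
  have hubound : ∀ x ≥ (1:ℝ), 0 < 2 * η x ∧ 2 * η x < 1 := by
    intro x hx
    obtain ⟨h1, h2⟩ := hrange x hx
    constructor <;> linarith
  have hint : IntervalIntegrable h' volume 1 T := by
    rw [intervalIntegrable_iff_integrableOn_Ioc_of_le hT]
    have hmeas : AEStronglyMeasurable h' (volume.restrict (Set.Ioc 1 T)) := by
      have h1 : ContinuousOn (fun x => (p : ℝ) * (2 * η x) ^ (p - 1)) (Set.Ioc 1 T) :=
        (continuousOn_const.mul ((continuousOn_const.mul (hηc.mono (fun y hy => le_of_lt hy.1))).pow _))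
      exact (h1.aestronglyMeasurable measurableSet_Ioc).mul
        ((measurable_deriv η).const_mul 2).aestronglyMeasurable.restrict
    refine Integrable.mono' (integrable_const ((p : ℝ) * (2 * ζ * η 1))) hmeas ?_
    rw [ae_restrict_iff' measurableSet_Ioc]
    filter_upwards with x hx
    have hx1 : (1:ℝ) ≤ x := le_of_lt hx.1
    obtain ⟨hu0, hu1⟩ := hubound x hx1
    have hd0 : deriv η x ≤ 0 := dpi_deriv_nonpos η hdiff hanti hx1
    have hd1 : -deriv η x ≤ ζ * η x := hdecay x hx1
    have hη1 : η x ≤ η 1 := le_of_lt (hanti (Set.mem_Ici.2 le_rfl) (Set.mem_Ici.2 hx1) hx.1)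
    have hp1 : (2 * η x) ^ (p - 1) ≤ 1 :=
      pow_le_one₀ (le_of_lt hu0) (le_of_lt hu1)
    have hp0 : (0:ℝ) ≤ (2 * η x) ^ (p - 1) := le_of_lt (pow_pos hu0 _)
    have habs : |2 * deriv η x| ≤ 2 * ζ * η 1 := by
      rw [abs_of_nonpos (by linarith)]
      have : ζ * η x ≤ ζ * η 1 := mul_le_mul_of_nonneg_left hη1 (le_of_lt hζ)
      linarith
    rw [hh', Real.norm_eq_abs]
    have heq : |(p:ℝ) * (2 * η x) ^ (p - 1) * (2 * deriv η x)|
        = (p:ℝ) * (2 * η x) ^ (p - 1) * |2 * deriv η x| := by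
      rw [abs_mul, abs_of_nonneg (by positivity : (0:ℝ) ≤ (p:ℝ) * (2 * η x) ^ (p - 1))]
    rw [heq]
    calc (p:ℝ) * (2 * η x) ^ (p-1) * (|2 * deriv η x|)
        ≤ (p:ℝ) * 1 * (2 * ζ * η 1) := by
          apply mul_le_mul _ habs (abs_nonneg _) (by positivity)
          exact mul_le_mul_of_nonneg_left hp1 (by positivity)
      _ = (p:ℝ) * (2 * ζ * η 1) := by ring
  have hftc : ∫ x in (1:ℝ)..T, h' x = (2 * η T) ^ p - (2 * η 1) ^ p :=
    intervalIntegral.integral_eq_sub_of_hasDerivAt hderiv hint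
  have hint2 : IntervalIntegrable (fun x => -((p:ℝ) * ζ) * (2 * η x) ^ p) volume 1 T := by
    apply ContinuousOn.intervalIntegrable
    rw [hIcc]
    exact continuousOn_const.mul (((continuousOn_const.mul (hηc.mono (fun y hy => hy.1))).pow _))
  have hmono : ∫ x in (1:ℝ)..T, -((p:ℝ) * ζ) * (2 * η x) ^ p ≤ ∫ x in (1:ℝ)..T, h' x := by
    apply intervalIntegral.integral_mono_on hT hint2 hint
    intro x hx
    have hx1 : (1:ℝ) ≤ x := hx.1
    obtain ⟨hu0, _⟩ := hubound x hx1
    have hd1 : -(ζ * (2 * η x)) ≤ 2 * deriv η x := by have := hdecay x hx1; linarith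
    have h0 : (0:ℝ) ≤ (p:ℝ) * (2 * η x) ^ (p - 1) := by positivity
    have hmul := mul_le_mul_of_nonneg_left hd1 h0
    have hpow : (2 * η x) ^ (p - 1) * (2 * η x) = (2 * η x) ^ p := by
      rw [← pow_succ]
      congr 1
      omega
    calc -((p:ℝ) * ζ) * (2 * η x) ^ p
        = ((p:ℝ) * (2 * η x) ^ (p - 1)) * (-(ζ * (2 * η x))) := by rw [← hpow]; ring
      _ ≤ h' x := hmul
  rw [hftc, intervalIntegral.integral_const_mul] at hmono
  nlinarith [hmono]

private lemma dpi_li2_summable {z : ℝ} (h0 : 0 ≤ z) (h1 : z < 1) :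
    Summable (fun n : ℕ => z ^ (n + 1) / ((n : ℝ) + 1) ^ 2) := by
  apply Summable.of_nonneg_of_le (fun n => by positivity) (fun n => ?_)
    (summable_geometric_of_lt_one h0 h1)
  calc z ^ (n + 1) / ((n : ℝ) + 1) ^ 2 ≤ z ^ (n + 1) := by
        apply div_le_self (by positivity)
        have : (1:ℝ) ≤ (n:ℝ) + 1 := by have := Nat.cast_nonneg (α := ℝ) n; linarith
        nlinarith
    _ ≤ z ^ n := pow_le_pow_of_le_one h0 (le_of_lt h1) (Nat.le_succ n)

/-- The dilogarithm (Spence's function) `Li₂(z) = Σ_{n=1}^∞ zⁿ/n²`. -/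
noncomputable def Li2 (z : ℝ) : ℝ := ∑' n : ℕ, z ^ (n + 1) / ((n : ℝ) + 1) ^ 2

/-- Theorem 3 (total privacy bound of DPI): with `η : [1,∞) → (0, 1/2)`
differentiable, strictly decreasing, decaying at least at exponential rate `ζ`,
with `M = 2η(1)` and `m = lim_{x→∞} 2η(x)`, the total privacy budget
`ε = (4/μ)·∫₁^∞ log((1+2η(x))/(1-2η(x))) dx ∈ [0, +∞]` satisfies
`ε ≥ (2/(μζ))·(Li₂(M²) - Li₂(m²))`. -/
theorem dpi_privacy_lower_bound (ζ μ : ℝ) (hζ : 0 < ζ) (hμ : 0 < μ) (η : ℝ → ℝ)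
    (hdiff : ∀ x ≥ (1 : ℝ), DifferentiableAt ℝ η x)
    (hrange : ∀ x ≥ (1 : ℝ), η x ∈ Set.Ioo (0 : ℝ) (1 / 2))
    (hanti : StrictAntiOn η (Set.Ici 1))
    (hdecay : ∀ x ≥ (1 : ℝ), -deriv η x ≤ ζ * η x)
    (m : ℝ) (hm : Filter.Tendsto (fun x => 2 * η x) Filter.atTop (nhds m))
    (M : ℝ) (hM : M = 2 * η 1) :
    ENNReal.ofReal ((2 / (μ * ζ)) * (Li2 (M ^ 2) - Li2 (m ^ 2))) ≤
      ENNReal.ofReal (4 / μ) *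
        ∫⁻ x in Set.Ici (1 : ℝ),
          ENNReal.ofReal (Real.log ((1 + 2 * η x) / (1 - 2 * η x))) := by
  have hηc : ContinuousOn η (Set.Ici 1) := fun x hx => ((hdiff x hx).continuousAt).continuousWithinAt
  have hM0 : 0 < M := by have := (hrange 1 le_rfl).1; rw [hM]; linarith
  have hM1 : M < 1 := by have := (hrange 1 le_rfl).2; rw [hM]; linarith
  have hmle : ∀ x, 1 ≤ x → m ≤ 2 * η x := by
    intro x hx
    refine le_of_tendsto hm (Filter.eventually_atTop.2 ⟨x, fun y hy => ?_⟩)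
    have : η y ≤ η x := (hanti.antitoneOn) (Set.mem_Ici.2 hx) (Set.mem_Ici.2 (hx.trans hy)) hy
    linarith
  have hm0 : 0 ≤ m := by
    refine ge_of_tendsto hm (Filter.eventually_atTop.2 ⟨1, fun y hy => ?_⟩)
    have := (hrange y hy).1; linarith
  have hmM : m ≤ M := hM ▸ hmle 1 le_rfl
  -- the term sequence
  set d : ℕ → ℝ := fun n => (M ^ (2 * (n + 1)) - m ^ (2 * (n + 1))) /
      (((2 * (n + 1) : ℕ) : ℝ) * ζ * ((n : ℝ) + 1)) with hd
  have hd_eq : ∀ n : ℕ, d n = (1 / (2 * ζ)) *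
      ((M ^ 2) ^ (n + 1) / ((n : ℝ) + 1) ^ 2 - (m ^ 2) ^ (n + 1) / ((n : ℝ) + 1) ^ 2) := by
    intro n
    rw [hd]
    simp only
    rw [← pow_mul, ← pow_mul, div_sub_div_same, one_div_mul_eq_div, div_div]
    have hc : ((2 * (n + 1) : ℕ) : ℝ) = 2 * ((n : ℝ) + 1) := by push_cast; ring
    rw [hc, div_eq_div_iff (by positivity) (by positivity)]
    ring
  have hd_nonneg : ∀ n : ℕ, 0 ≤ d n := by
    intro n
    apply div_nonneg _ (by positivity)
    have := pow_le_pow_left₀ hm0 hmM (2 * (n + 1))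
    linarith
  have hA : Summable (fun n : ℕ => (M ^ 2) ^ (n + 1) / ((n : ℝ) + 1) ^ 2) :=
    dpi_li2_summable (by positivity) (by nlinarith)
  have hB : Summable (fun n : ℕ => (m ^ 2) ^ (n + 1) / ((n : ℝ) + 1) ^ 2) :=
    dpi_li2_summable (by positivity) (by nlinarith)
  have hd_summable : Summable d := by
    rw [funext hd_eq]
    exact ((hA.sub hB).mul_left _)
  have htsum_d : ∑' n, d n = (1 / (2 * ζ)) * (Li2 (M ^ 2) - Li2 (m ^ 2)) := by
    rw [tsum_congr hd_eq, tsum_mul_left, Summable.tsum_sub hA hB]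
    rfl
  -- per-term lower bound on the lintegral
  have hterm : ∀ n : ℕ, ENNReal.ofReal (d n) ≤
      ∫⁻ x in Set.Ici (1:ℝ),
        ENNReal.ofReal ((2 * η x) ^ (2 * (n + 1)) / ((n : ℝ) + 1)) := by
    intro n
    set p : ℕ := 2 * (n + 1) with hp
    have hp1 : 1 ≤ p := by omega
    have hn1 : (0:ℝ) < (n : ℝ) + 1 := by positivity
    have hpe : Even p := ⟨n + 1, by omega⟩
    have hTbound : ∀ T, 1 ≤ T →
        ENNReal.ofReal ((M ^ p - (2 * η T) ^ p) / (((p : ℕ) : ℝ) * ζ * ((n : ℝ) + 1))) ≤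
        ∫⁻ x in Set.Ici (1:ℝ), ENNReal.ofReal ((2 * η x) ^ p / ((n : ℝ) + 1)) := by
      intro T hT
      have hkey := dpi_key ζ hζ η hdiff hrange hanti hdecay p hp1 T hT
      set I : ℝ := ∫ x in (1:ℝ)..T, (2 * η x) ^ p with hI
      have hpζ : (0:ℝ) < ((p : ℕ) : ℝ) * ζ := by
        have : (0:ℝ) < ((p : ℕ) : ℝ) := by exact_mod_cast Nat.pos_of_ne_zero (by omega)
        positivity
      have hreal : (M ^ p - (2 * η T) ^ p) / (((p : ℕ) : ℝ) * ζ * ((n : ℝ) + 1)) ≤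
          I / ((n : ℝ) + 1) := by
        rw [← div_div]
        gcongr
        rw [div_le_iff₀ hpζ, hM]
        nlinarith [hkey]
      have hcont : ContinuousOn (fun x => (2 * η x) ^ p / ((n : ℝ) + 1)) (Set.Icc 1 T) :=
        (((continuousOn_const.mul (hηc.mono (fun y hy => hy.1))).pow _).div_const _)
      have hIoc : IntegrableOn (fun x => (2 * η x) ^ p / ((n : ℝ) + 1)) (Set.Ioc 1 T) :=
        (hcont.integrableOn_Icc).mono_set Set.Ioc_subset_Icc_self
      have hnn : 0 ≤ᵐ[volume.restrict (Set.Ioc 1 T)]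
          (fun x => (2 * η x) ^ p / ((n : ℝ) + 1)) := by
        filter_upwards with x
        exact div_nonneg (hpe.pow_nonneg _) (le_of_lt hn1)
      have hconv := ofReal_integral_eq_lintegral_ofReal hIoc hnn
      have hIeq : ∫ x in Set.Ioc 1 T, (2 * η x) ^ p / ((n : ℝ) + 1) = I / ((n : ℝ) + 1) := by
        rw [hI, ← intervalIntegral.integral_of_le hT, intervalIntegral.integral_div]
      calc ENNReal.ofReal ((M ^ p - (2 * η T) ^ p) / (((p : ℕ) : ℝ) * ζ * ((n : ℝ) + 1)))
          ≤ ENNReal.ofReal (I / ((n : ℝ) + 1)) := ENNReal.ofReal_le_ofReal hreal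
        _ = ∫⁻ x in Set.Ioc 1 T, ENNReal.ofReal ((2 * η x) ^ p / ((n : ℝ) + 1)) := by
            rw [← hIeq, hconv]
        _ ≤ ∫⁻ x in Set.Ici (1:ℝ), ENNReal.ofReal ((2 * η x) ^ p / ((n : ℝ) + 1)) :=
            lintegral_mono_set (fun y hy => le_of_lt hy.1)
    have hlim : Filter.Tendsto
        (fun T => ENNReal.ofReal ((M ^ p - (2 * η T) ^ p) / (((p : ℕ) : ℝ) * ζ * ((n : ℝ) + 1))))
        Filter.atTop
        (nhds (ENNReal.ofReal ((M ^ p - m ^ p) / (((p : ℕ) : ℝ) * ζ * ((n : ℝ) + 1))))) := by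
      apply (ENNReal.continuous_ofReal.tendsto _).comp
      exact ((tendsto_const_nhds.sub (hm.pow p)).div_const _)
    exact le_of_tendsto hlim (Filter.eventually_atTop.2 ⟨1, fun T hT => hTbound T hT⟩)
  -- pointwise series bound
  have hpt : ∀ x, 1 ≤ x →
      (∑' n : ℕ, ENNReal.ofReal ((2 * η x) ^ (2 * (n + 1)) / ((n : ℝ) + 1))) ≤
        ENNReal.ofReal (Real.log ((1 + 2 * η x) / (1 - 2 * η x))) := by
    intro x hx
    obtain ⟨h0, h1⟩ := hrange x hx
    set u := 2 * η x with hu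
    have hu0 : 0 < u := by rw [hu]; linarith
    have hu1 : u < 1 := by rw [hu]; linarith
    have habs : |u ^ 2| < 1 := by rw [abs_of_nonneg (by positivity)]; nlinarith
    have hsum := Real.hasSum_pow_div_log_of_abs_lt_one habs
    have heq : ∑' n : ℕ, ENNReal.ofReal (u ^ (2 * (n + 1)) / ((n : ℝ) + 1)) =
        ENNReal.ofReal (-Real.log (1 - u ^ 2)) := by
      have hterm' : ∀ n : ℕ, ENNReal.ofReal (u ^ (2 * (n + 1)) / ((n : ℝ) + 1)) =
          ENNReal.ofReal ((u ^ 2) ^ (n + 1) / ((n : ℝ) + 1)) := by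
        intro n; rw [← pow_mul]
      rw [tsum_congr hterm',
        ← ENNReal.ofReal_tsum_of_nonneg (fun n => by positivity) hsum.summable, hsum.tsum_eq]
    rw [heq]
    apply ENNReal.ofReal_le_ofReal
    have h1u : (0:ℝ) < 1 - u := by linarith
    have h2u : (0:ℝ) < 1 + u := by linarith
    rw [Real.log_div (ne_of_gt h2u) (ne_of_gt h1u)]
    have hfac : 1 - u ^ 2 = (1 - u) * (1 + u) := by ring
    rw [hfac, Real.log_mul (ne_of_gt h1u) (ne_of_gt h2u)]
    have := Real.log_nonneg (by linarith : (1:ℝ) ≤ 1 + u)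
    linarith
  -- measurability of the terms
  have hmeas : ∀ n : ℕ, AEMeasurable
      (fun x => ENNReal.ofReal ((2 * η x) ^ (2 * (n + 1)) / ((n : ℝ) + 1)))
      (volume.restrict (Set.Ici (1:ℝ))) := by
    intro n
    have hcont : ContinuousOn (fun x => (2 * η x) ^ (2 * (n + 1)) / ((n : ℝ) + 1))
        (Set.Ici (1:ℝ)) := ((continuousOn_const.mul hηc).pow _).div_const _
    exact ENNReal.measurable_ofReal.comp_aemeasurable
      (hcont.aemeasurable measurableSet_Ici)
  -- main chain
  have hmain : ENNReal.ofReal ((1 / (2 * ζ)) * (Li2 (M ^ 2) - Li2 (m ^ 2))) ≤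
      ∫⁻ x in Set.Ici (1:ℝ),
        ENNReal.ofReal (Real.log ((1 + 2 * η x) / (1 - 2 * η x))) := by
    calc ENNReal.ofReal ((1 / (2 * ζ)) * (Li2 (M ^ 2) - Li2 (m ^ 2)))
        = ENNReal.ofReal (∑' n, d n) := by rw [htsum_d]
      _ = ∑' n, ENNReal.ofReal (d n) :=
          ENNReal.ofReal_tsum_of_nonneg hd_nonneg hd_summable
      _ ≤ ∑' n : ℕ, ∫⁻ x in Set.Ici (1:ℝ),
            ENNReal.ofReal ((2 * η x) ^ (2 * (n + 1)) / ((n : ℝ) + 1)) :=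
          ENNReal.tsum_le_tsum hterm
      _ = ∫⁻ x in Set.Ici (1:ℝ), ∑' n : ℕ,
            ENNReal.ofReal ((2 * η x) ^ (2 * (n + 1)) / ((n : ℝ) + 1)) :=
          (lintegral_tsum hmeas).symm
      _ ≤ ∫⁻ x in Set.Ici (1:ℝ),
            ENNReal.ofReal (Real.log ((1 + 2 * η x) / (1 - 2 * η x))) := by
          apply lintegral_mono_ae
          rw [ae_restrict_iff' measurableSet_Ici]
          filter_upwards with x hx
          exact hpt x hx
  calc ENNReal.ofReal ((2 / (μ * ζ)) * (Li2 (M ^ 2) - Li2 (m ^ 2)))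
      = ENNReal.ofReal ((4 / μ) * ((1 / (2 * ζ)) * (Li2 (M ^ 2) - Li2 (m ^ 2)))) := by
        congr 1
        field_simp
        ring
    _ = ENNReal.ofReal (4 / μ) *
        ENNReal.ofReal ((1 / (2 * ζ)) * (Li2 (M ^ 2) - Li2 (m ^ 2))) :=
        ENNReal.ofReal_mul (by positivity)
    _ ≤ ENNReal.ofReal (4 / μ) *
        ∫⁻ x in Set.Ici (1 : ℝ),
          ENNReal.ofReal (Real.log ((1 + 2 * η x) / (1 - 2 * η x))) :=
        mul_le_mul_right hmain _
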